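/- arXiv:2403.16310 — 3 statements merged into one kernel-verified Lean document; each statement's English description precedes it below -/
import Mathlib

section
/- For every integer n ≥ 3 divisible by 3, the circular assignment that gives the vertex k of the cycle graph C_n the color k mod 3 and gives the edge {k, k+1} the color (k+2) mod 3 (colors taken in ZMod 3) is a proper total coloring of C_n; in particular C_n admits a 3-total coloring. -/
/-!
In `ZMod 3` the three colors sum to `0`, so for distinct colors `x ≠ y` the element `-(x + y)`
is the third one. Coloring every edge `s(u, v)` by `-(cv u + cv v)` therefore turns a vertex
coloring `cv` into a total coloring as soon as `cv` is proper and the neighbours of each vertex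
get pairwise distinct colors. On the cycle colored by `k mod 3` the two neighbours `k ± 1` of `k`
get colors differing by `2`, and the edge `s(k, k + 1)` gets `-(2k + 1) = k + 2`.
-/

/-- A proper total coloring of `G`: `cv` colors the vertices, `ce` colors the edges
(as unordered pairs); adjacent vertices get different colors, an edge gets a color
different from both of its endpoints, and edges sharing an endpoint get different colors. -/
def IsTotalColoring {V C : Type*} (G : SimpleGraph V) (cv : V → C) (ce : Sym2 V → C) : Prop :=
  (∀ ⦃u v : V⦄, G.Adj u v → cv u ≠ cv v) ∧
  (∀ ⦃u v : V⦄, G.Adj u v → ce s(u, v) ≠ cv u) ∧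
  (∀ ⦃u v w : V⦄, G.Adj u v → G.Adj u w → v ≠ w → ce s(u, v) ≠ ce s(u, w))

/-- The total chromatic number: the least `k` such that `G` has a proper total
coloring with a set of `k` colors. -/
noncomputable def totalChromaticNumber {V : Type*} (G : SimpleGraph V) : ℕ :=
  sInf {k : ℕ | ∃ (cv : V → Fin k) (ce : Sym2 V → Fin k), IsTotalColoring G cv ce}

/-- The cycle graph `C_n` on vertex set `ZMod n`: `k` and `k+1` are adjacent. -/
def cycleGraph (n : ℕ) : SimpleGraph (ZMod n) :=
  SimpleGraph.fromRel (fun a b => b = a + 1)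

section ThirdColor

variable {V : Type*}

def thirdColor (cv : V → ZMod 3) : Sym2 V → ZMod 3 :=
  Sym2.lift ⟨fun u v => -(cv u + cv v), fun u v => by simp only [add_comm]⟩

@[simp]
lemma thirdColor_mk (cv : V → ZMod 3) (u v : V) : thirdColor cv s(u, v) = -(cv u + cv v) :=
  rfl

lemma ZMod.neg_add_ne_left_of_ne {x y : ZMod 3} (h : x ≠ y) : -(x + y) ≠ x := by
  revert x y; decide

theorem isTotalColoring_thirdColor {G : SimpleGraph V} {cv : V → ZMod 3}
    (hadj : ∀ ⦃u v⦄, G.Adj u v → cv u ≠ cv v)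
    (hnbr : ∀ ⦃u v w⦄, G.Adj u v → G.Adj u w → v ≠ w → cv v ≠ cv w) :
    IsTotalColoring G cv (thirdColor cv) :=
  ⟨hadj, fun _ _ h => ZMod.neg_add_ne_left_of_ne (hadj h),
    fun _ _ _ hv hw hvw => by simpa using hnbr hv hw hvw⟩

end ThirdColor

section Cycle

variable {n : ℕ} {f : ZMod n → ZMod 3}

lemma ZMod.three_add_one_ne (x : ZMod 3) : x + 1 ≠ x := by
  revert x; decide

lemma ZMod.three_add_two_ne (x : ZMod 3) : x + 1 + 1 ≠ x := by
  revert x; decide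

lemma cycleGraph_map_ne_of_adj (hf : ∀ k, f (k + 1) = f k + 1) ⦃u v : ZMod n⦄
    (h : (cycleGraph n).Adj u v) : f u ≠ f v := by
  obtain ⟨-, rfl | rfl⟩ := h
  · rw [hf]; exact (ZMod.three_add_one_ne _).symm
  · rw [hf]; exact ZMod.three_add_one_ne _

lemma cycleGraph_map_ne_of_adj_of_adj (hf : ∀ k, f (k + 1) = f k + 1) ⦃u v w : ZMod n⦄
    (hv : (cycleGraph n).Adj u v) (hw : (cycleGraph n).Adj u w) (hvw : v ≠ w) : f v ≠ f w := by
  obtain ⟨-, rfl | rfl⟩ := hv <;> obtain ⟨-, hw | hw⟩ := hw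
  · exact absurd hw.symm hvw
  · rw [hw, hf, hf]; exact ZMod.three_add_two_ne _
  · rw [hw, hf, hf]; exact (ZMod.three_add_two_ne _).symm
  · exact absurd (add_right_cancel hw) hvw

end Cycle

theorem cycle_circular_three_total_coloring_general (n : ℕ) (h3 : 3 ∣ n) :
    ∃ ce : Sym2 (ZMod n) → ZMod 3,
      (∀ k : ZMod n, ce s(k, k + 1) = ZMod.castHom h3 (ZMod 3) k + 2) ∧
      IsTotalColoring (cycleGraph n) (fun k => ZMod.castHom h3 (ZMod 3) k) ce := by
  set φ := ZMod.castHom h3 (ZMod 3)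
  have hφ (k : ZMod n) : φ (k + 1) = φ k + 1 := by rw [map_add, map_one]
  refine ⟨thirdColor φ, fun k => ?_,
    isTotalColoring_thirdColor (cycleGraph_map_ne_of_adj hφ) (cycleGraph_map_ne_of_adj_of_adj hφ)⟩
  rw [thirdColor_mk, hφ]
  generalize φ k = x
  revert x; decide

theorem cycle_circular_three_total_coloring (n : ℕ) (hn : 3 ≤ n) (h3 : 3 ∣ n) :
    ∃ ce : Sym2 (ZMod n) → ZMod 3,
      (∀ k : ZMod n, ce s(k, k + 1) = ZMod.castHom h3 (ZMod 3) k + 2) ∧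
      IsTotalColoring (cycleGraph n) (fun k => ZMod.castHom h3 (ZMod 3) k) ce :=
  cycle_circular_three_total_coloring_general n h3
end

section
/- Let n ≥ 3 and let c be a proper total coloring of the cycle graph C_n that uses at most 3 colors. Then any three consecutive vertices v_k, v_{k+1}, v_{k+2} receive pairwise distinct colors; consequently c(v_{k+3}) = c(v_k) for every k ∈ ZMod n, and n is divisible by 3. -/
theorem cycle_three_total_coloring_structure (n : ℕ) (hn : 3 ≤ n) {C : Type*} [Fintype C]
    (hC : Fintype.card C ≤ 3) (cv : ZMod n → C) (ce : Sym2 (ZMod n) → C)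
    (hc : IsTotalColoring (cycleGraph n) cv ce) :
    (∀ k : ZMod n, cv k ≠ cv (k + 1) ∧ cv k ≠ cv (k + 2) ∧ cv (k + 1) ≠ cv (k + 2)) ∧
    (∀ k : ZMod n, cv (k + 3) = cv k) ∧ 3 ∣ n := by
  classical
  haveI : NeZero n := ⟨by omega⟩
  haveI : Fact (1 < n) := ⟨by omega⟩
  obtain ⟨hv, he, hee⟩ := hc
  have h1 : (1 : ZMod n) ≠ 0 := one_ne_zero
  have h2 : (2 : ZMod n) ≠ 0 := by
    have : ((2 : ℕ) : ZMod n) ≠ 0 := by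
      rw [Ne, ZMod.natCast_eq_zero_iff]
      intro h
      have := Nat.le_of_dvd (by norm_num) h
      omega
    simpa using this
  have hadj : ∀ k : ZMod n, (cycleGraph n).Adj k (k + 1) := by
    intro k
    refine ⟨?_, Or.inl rfl⟩
    intro h
    exact h1 ((left_eq_add).mp h)
  have hne2 : ∀ k : ZMod n, k ≠ k + 2 := by
    intro k h
    exact h2 ((left_eq_add).mp h)
  -- main distinctness
  have hdist : ∀ k : ZMod n, cv k ≠ cv (k + 1) ∧ cv k ≠ cv (k + 2) ∧ cv (k + 1) ≠ cv (k + 2) := by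
    intro k
    have a1 : (cycleGraph n).Adj k (k + 1) := hadj k
    have a2 : (cycleGraph n).Adj (k + 1) (k + 2) := by
      have := hadj (k + 1); rwa [add_assoc, one_add_one_eq_two] at this
    -- abbreviations
    set b := cv (k + 1) with hb
    set e1 := ce s(k, k + 1) with he1def
    set e2 := ce s(k + 1, k + 2) with he2def
    have hab : cv k ≠ b := hv a1
    have hbc : b ≠ cv (k + 2) := hv a2
    have he1a : e1 ≠ cv k := he a1
    have he1b : e1 ≠ b := by
      have := he a1.symm
      rwa [Sym2.eq_swap] at this
    have he2b : e2 ≠ b := he a2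
    have he2c : e2 ≠ cv (k + 2) := by
      have := he a2.symm
      rwa [Sym2.eq_swap] at this
    have he12 : e1 ≠ e2 := by
      have := hee a1.symm a2 (fun h => hne2 k h)
      rwa [Sym2.eq_swap (a := k + 1) (b := k)] at this
    -- {b, e1, e2} is all of C
    have hcard : ({b, e1, e2} : Finset C).card = 3 := by
      rw [Finset.card_insert_of_notMem (by simp [he1b.symm, he2b.symm]),
        Finset.card_insert_of_notMem (by simp [he12]), Finset.card_singleton]
    have huniv : ({b, e1, e2} : Finset C) = Finset.univ := by
      apply Finset.eq_univ_of_card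
      have : 3 ≤ Fintype.card C := by
        rw [← hcard]; exact Finset.card_le_card (Finset.subset_univ _)
      omega
    have hmem : ∀ x : C, x = b ∨ x = e1 ∨ x = e2 := by
      intro x
      have : x ∈ ({b, e1, e2} : Finset C) := huniv ▸ Finset.mem_univ x
      simpa using this
    have hae2 : cv k = e2 := by
      rcases hmem (cv k) with h | h | h
      · exact absurd h hab
      · exact absurd h.symm he1a
      · exact h
    have hce1 : cv (k + 2) = e1 := by
      rcases hmem (cv (k + 2)) with h | h | h
      · exact absurd h.symm hbc
      · exact h
      · exact absurd h.symm he2c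
    refine ⟨hab, ?_, hbc⟩
    rw [hae2, hce1]
    exact fun h => he12 (h ▸ rfl)
  -- {cv k, cv (k+1), cv (k+2)} is all of C
  have hmemv : ∀ k : ZMod n, ∀ x : C, x = cv k ∨ x = cv (k + 1) ∨ x = cv (k + 2) := by
    intro k x
    obtain ⟨h01, h02, h12⟩ := hdist k
    have hcard : ({cv k, cv (k + 1), cv (k + 2)} : Finset C).card = 3 := by
      rw [Finset.card_insert_of_notMem (by simp [h01, h02]),
        Finset.card_insert_of_notMem (by simp [h12]), Finset.card_singleton]
    have huniv : ({cv k, cv (k + 1), cv (k + 2)} : Finset C) = Finset.univ := by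
      apply Finset.eq_univ_of_card
      have : 3 ≤ Fintype.card C := by
        rw [← hcard]; exact Finset.card_le_card (Finset.subset_univ _)
      omega
    have : x ∈ ({cv k, cv (k + 1), cv (k + 2)} : Finset C) := huniv ▸ Finset.mem_univ x
    simpa using this
  have hper : ∀ k : ZMod n, cv (k + 3) = cv k := by
    intro k
    obtain ⟨h01, h02, h12⟩ := hdist (k + 1)
    have e1 : k + 1 + 1 = k + 2 := by ring
    have e2 : k + 1 + 2 = k + 3 := by ring
    simp only [e1, e2] at h01 h02 h12
    rcases hmemv k (cv (k + 3)) with h | h | h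
    · exact h
    · exact absurd h.symm h02
    · exact absurd h.symm h12
  refine ⟨hdist, hper, ?_⟩
  -- divisibility
  by_contra hdvd
  have hcop : Nat.Coprime 3 n := (Nat.Prime.coprime_iff_not_dvd (by norm_num)).mpr hdvd
  have hperN : ∀ (m : ℕ) (k : ZMod n), cv (k + 3 * m) = cv k := by
    intro m
    induction m with
    | zero => simp
    | succ m ih =>
      intro k
      have : (k : ZMod n) + 3 * (m + 1 : ℕ) = (k + 3) + 3 * m := by push_cast; ring
      rw [this, ih, hper]
  have hperZ : ∀ x k : ZMod n, cv (k + 3 * x) = cv k := by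
    intro x k
    have hx : ((x.val : ℕ) : ZMod n) = x := ZMod.natCast_rightInverse x
    rw [← hx]
    exact hperN _ k
  set u : ZMod n := (((ZMod.unitOfCoprime 3 hcop)⁻¹ : (ZMod n)ˣ) : ZMod n) with hu
  have h3u : (3 : ZMod n) * u = 1 := by
    have h : (((ZMod.unitOfCoprime 3 hcop) * (ZMod.unitOfCoprime 3 hcop)⁻¹ : (ZMod n)ˣ) : ZMod n) = 1 := by
      rw [mul_inv_cancel]; rfl
    rw [Units.val_mul, ZMod.coe_unitOfCoprime] at h
    rw [hu]
    simp only [Nat.cast_ofNat] at h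
    exact h
  have : cv (0 + 1) = cv 0 := by
    have := hperZ u 0
    rwa [h3u] at this
  exact (hdist 0).1 this.symm
end

section
/- Let H be the simple graph with vertex set {a_i : i ∈ ZMod 6} ∪ {b_j : j ∈ ZMod 18}, whose edges are a_i–a_{i+1} for all i ∈ ZMod 6, b_j–b_{j+1} for all j ∈ ZMod 18, and the six radial edges a_i–b_{3i} for i ∈ ZMod 6. Then there is no proper total coloring of H with a set of 4 colors in which some single color t is assigned to all six radial edges while no vertex b_j and no edge b_j–b_{j+1} of the 18-cycle receives the color t. -/
/-- The inner (outer) layer of a fullerene nanodisc: a 6-cycle on the `Sum.inl`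
copy of `ZMod 6` (vertices `a_i`), an 18-cycle on the `Sum.inr` copy of
`ZMod 18` (vertices `b_j`), and six radial edges `a_i — b_{3i}`. -/
def innerLayerGraph : SimpleGraph (ZMod 6 ⊕ ZMod 18) :=
  SimpleGraph.fromRel (fun a b =>
    match a, b with
    | Sum.inl i, Sum.inl j => j = i + 1
    | Sum.inr i, Sum.inr j => j = i + 1
    | Sum.inl i, Sum.inr j => j = (3 * i.val : ZMod 18)
    | Sum.inr _, Sum.inl _ => False)

theorem Finset.eq_of_ne_of_card_le_three {α : Type*} {s : Finset α} (hs : s.card ≤ 3)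
    {a b c d : α} (ha : a ∈ s) (hb : b ∈ s) (hc : c ∈ s) (hd : d ∈ s)
    (hab : a ≠ b) (hac : a ≠ c) (hbc : b ≠ c) (hbd : b ≠ d) (hcd : c ≠ d) : d = a := by
  classical
  by_contra hda
  have h4 : ({a, b, c, d} : Finset α).card = 4 :=
    Finset.card_eq_four.mpr ⟨a, b, c, d, hab, hac, Ne.symm hda, hbc, hbd, hcd, rfl⟩
  have hsub : ({a, b, c, d} : Finset α) ⊆ s := by simp [Finset.insert_subset_iff, *]
  have := Finset.card_le_card hsub
  omega

/-- The proper-total-coloring conditions along a walk: `v k` is the color of its `k`-th vertex and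
`e k` that of the edge from the `k`-th to the `(k + 1)`-st vertex. -/
structure IsWalkTotalColoring {ι α : Type*} [Add ι] [One ι] (v e : ι → α) : Prop where
  vertex_ne_succ : ∀ k, v k ≠ v (k + 1)
  edge_ne_left : ∀ k, e k ≠ v k
  edge_ne_right : ∀ k, e k ≠ v (k + 1)
  edge_ne_succ : ∀ k, e k ≠ e (k + 1)

theorem IsTotalColoring.isWalkTotalColoring {V C ι : Type*} [Add ι] [One ι]
    {G : SimpleGraph V} {cv : V → C} {ce : Sym2 V → C} (hc : IsTotalColoring G cv ce)
    {p : ι → V} (hadj : ∀ k, G.Adj (p k) (p (k + 1))) (hne : ∀ k, p k ≠ p (k + 1 + 1)) :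
    IsWalkTotalColoring (cv ∘ p) (fun k => ce s(p k, p (k + 1))) where
  vertex_ne_succ k := hc.1 (hadj k)
  edge_ne_left k := hc.2.1 (hadj k)
  edge_ne_right k := by
    rw [Sym2.eq_swap]
    exact hc.2.1 (hadj k).symm
  edge_ne_succ k := by
    rw [Sym2.eq_swap]
    exact hc.2.2 (hadj k).symm (hadj (k + 1)) (hne k)

namespace IsWalkTotalColoring

variable {ι α : Type*} [Add ι] [One ι] {v e : ι → α} {s : Finset α}
  (hc : IsWalkTotalColoring v e) (hs : s.card ≤ 3) (hv : ∀ k, v k ∈ s) (he : ∀ k, e k ∈ s)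
include hc hs hv he

theorem edge_succ_eq_vertex (k : ι) : e (k + 1) = v k :=
  Finset.eq_of_ne_of_card_le_three hs (hv k) (he k) (hv (k + 1)) (he (k + 1))
    (hc.edge_ne_left k).symm (hc.vertex_ne_succ k) (hc.edge_ne_right k) (hc.edge_ne_succ k)
    (hc.edge_ne_left (k + 1)).symm

theorem vertex_add_two_eq_edge (k : ι) : v (k + 1 + 1) = e k :=
  Finset.eq_of_ne_of_card_le_three hs (he k) (hv (k + 1)) (he (k + 1)) (hv (k + 1 + 1))
    (hc.edge_ne_right k) (hc.edge_ne_succ k) (hc.edge_ne_left (k + 1)).symm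
    (hc.vertex_ne_succ (k + 1)) (hc.edge_ne_right (k + 1))

theorem vertex_ne_add_two (k : ι) : v k ≠ v (k + 1 + 1) := by
  rw [hc.vertex_add_two_eq_edge hs hv he]
  exact (hc.edge_ne_left k).symm

theorem vertex_add_three (k : ι) : v (k + 1 + 1 + 1) = v k := by
  rw [hc.vertex_add_two_eq_edge hs hv he, hc.edge_succ_eq_vertex hs hv he]

end IsWalkTotalColoring

section innerLayerGraph

open Sum

theorem innerLayerGraph_adj_inl (i : ZMod 6) : innerLayerGraph.Adj (inl i) (inl (i + 1)) := by
  simp only [innerLayerGraph, SimpleGraph.fromRel_adj]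
  exact ⟨by simpa using (by decide : (1 : ZMod 6) ≠ 0), Or.inl trivial⟩

theorem innerLayerGraph_adj_inr (j : ZMod 18) : innerLayerGraph.Adj (inr j) (inr (j + 1)) := by
  simp only [innerLayerGraph, SimpleGraph.fromRel_adj]
  exact ⟨by simpa using (by decide : (1 : ZMod 18) ≠ 0), Or.inl trivial⟩

theorem innerLayerGraph_adj_radial (i : ZMod 6) :
    innerLayerGraph.Adj (inl i) (inr ((3 * i.val : ZMod 18))) := by
  simp only [innerLayerGraph, SimpleGraph.fromRel_adj]
  exact ⟨by simp, Or.inl trivial⟩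

end innerLayerGraph

theorem innerLayer_no_four_total_coloring_radial_monochromatic :
    ¬ ∃ (cv : ZMod 6 ⊕ ZMod 18 → Fin 4) (ce : Sym2 (ZMod 6 ⊕ ZMod 18) → Fin 4) (t : Fin 4),
      IsTotalColoring innerLayerGraph cv ce ∧
      (∀ i : ZMod 6, ce s(Sum.inl i, Sum.inr ((3 * i.val : ZMod 18))) = t) ∧
      (∀ j : ZMod 18, cv (Sum.inr j) ≠ t ∧ ce s(Sum.inr j, Sum.inr (j + 1)) ≠ t) := by
  rintro ⟨cv, ce, t, hc, hrad, hB⟩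
  have hs : ({t}ᶜ : Finset (Fin 4)).card ≤ 3 := by rw [Finset.card_compl]; simp
  have hb := hc.isWalkTotalColoring innerLayerGraph_adj_inr (by decide)
  have hb_mem : ∀ j, cv (Sum.inr j) ∈ ({t}ᶜ : Finset (Fin 4)) := by simp [hB]
  have hbe_mem : ∀ j, ce s(Sum.inr j, Sum.inr (j + 1)) ∈ ({t}ᶜ : Finset (Fin 4)) := by simp [hB]
  have hb3 : cv (Sum.inr 3) = cv (Sum.inr 0) := hb.vertex_add_three hs hb_mem hbe_mem 0
  have hb6 : cv (Sum.inr 6) = cv (Sum.inr 0) :=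
    (hb.vertex_add_three hs hb_mem hbe_mem 3).trans hb3
  have ha := hc.isWalkTotalColoring innerLayerGraph_adj_inl (by decide)
  -- the radial edge at `a_i` has colour `t`, and it meets `a_i` and both 6-cycle edges there
  have ha_mem : ∀ i, cv (Sum.inl i) ∈ ({t}ᶜ : Finset (Fin 4)) := fun i => by
    simpa using (hrad i ▸ hc.2.1 (innerLayerGraph_adj_radial i)).symm
  have hae_mem : ∀ i, ce s(Sum.inl i, Sum.inl (i + 1)) ∈ ({t}ᶜ : Finset (Fin 4)) := fun i => by
    simpa using hrad i ▸ hc.2.2 (innerLayerGraph_adj_inl i) (innerLayerGraph_adj_radial i)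
      Sum.inl_ne_inr
  have hr0 : cv (Sum.inl 0) ≠ cv (Sum.inr 0) := hc.1 (innerLayerGraph_adj_radial 0)
  have hr1 : cv (Sum.inl 1) ≠ cv (Sum.inr 0) := hb3 ▸ hc.1 (innerLayerGraph_adj_radial 1)
  have hr2 : cv (Sum.inl 2) ≠ cv (Sum.inr 0) := hb6 ▸ hc.1 (innerLayerGraph_adj_radial 2)
  exact hr0 <| Eq.symm <| Finset.eq_of_ne_of_card_le_three hs
    (ha_mem 0) (ha_mem 1) (ha_mem 2) (hb_mem 0) (ha.vertex_ne_succ 0)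
    (ha.vertex_ne_add_two hs ha_mem hae_mem 0) (ha.vertex_ne_succ 1) hr1 hr2
end
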